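/- Let Γ be a Fuchsian group containing the translation z ↦ z + λ, and set t_0 = (1/2) min{|c(g)| : g ∈ Γ, c(g) ≠ 0}. If 0 < t < t_0, then the horoballs F_t(g(∞)), for distinct points g(∞) with g ∈ Γ, are pairwise disjoint. -/

import Mathlib

open Complex

/-- The horoball `F_t(g(∞))`. -/
noncomputable def horoball (m : Matrix (Fin 2) (Fin 2) ℝ) (t : ℝ) : Set ℂ :=
  if m 1 0 = 0 then {z : ℂ | 1 / (2 * t) < z.im}
  else Metric.ball ((m 0 0 / m 1 0 : ℝ) + (t / (m 1 0) ^ 2 : ℝ) * I) (t / (m 1 0) ^ 2)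

/-- The point `g(∞)` on the boundary `ℝ ∪ {∞}`: `none` means `∞`. -/
noncomputable def cuspPt (m : Matrix (Fin 2) (Fin 2) ℝ) : Option ℝ :=
  if m 1 0 = 0 then none else some (m 0 0 / m 1 0)

/-!
A disc of radius `r` tangent to `ℝ` lies below height `2r`, and discs of radii `r₁`, `r₂` tangent
to `ℝ` at `x₁`, `x₂` are disjoint once `4 r₁ r₂ ≤ (x₁ - x₂)²`. For the horoballs at `a₁/c₁ ≠ a₂/c₂`
these conditions read `4t² ≤ c²` and `4t² ≤ (a₁c₂ - a₂c₁)²`, and `a₁c₂ - a₂c₁` is the lower-left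
entry of `g⁻¹h ∈ Γ`. Every nonzero lower-left entry of an element of `Γ` is at least `2t₀ > 2t`
in absolute value.
-/

open scoped MatrixGroups

namespace Complex

theorem disjoint_setOf_lt_im_ball_tangent {s x r : ℝ} (hr : 2 * r ≤ s) :
    Disjoint {z : ℂ | s < z.im} (Metric.ball (x + r * I) r) := by
  refine Set.disjoint_left.mpr fun z (hz : s < z.im) hzb => ?_
  have him : |z.im - r| < r := by
    calc |z.im - r| = |(z - (x + r * I)).im| := by simp
      _ ≤ ‖z - (x + r * I)‖ := abs_im_le_norm _
      _ < r := by rwa [← dist_eq, ← Metric.mem_ball]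
  linarith [le_abs_self (z.im - r)]

theorem disjoint_ball_tangent_ball_tangent {x₁ x₂ r₁ r₂ : ℝ}
    (h : 4 * r₁ * r₂ ≤ (x₁ - x₂) ^ 2) :
    Disjoint (Metric.ball (x₁ + r₁ * I) r₁) (Metric.ball (x₂ + r₂ * I) r₂) := by
  apply Metric.ball_disjoint_ball
  rcases le_or_gt (r₁ + r₂) 0 with hneg | hpos
  · exact hneg.trans dist_nonneg
  rw [dist_eq_re_im, Real.le_sqrt' hpos]
  simp only [add_re, ofReal_re, mul_re, I_re, I_im, add_im, ofReal_im, mul_im]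
  nlinarith

end Complex

theorem two_mul_div_sq_le_one_div {t c : ℝ} (ht : 0 < t) (hc : 2 * t ≤ |c|) :
    2 * (t / c ^ 2) ≤ 1 / (2 * t) := by
  have hsq : (2 * t) ^ 2 ≤ c ^ 2 := sq_le_sq.mpr ((abs_of_pos (by positivity)).trans_le hc)
  have hc : 0 < c ^ 2 := (by positivity : 0 < (2 * t) ^ 2).trans_le hsq
  rw [mul_div_assoc', div_le_div_iff₀ hc (by positivity)]
  linarith

theorem disjoint_horoball_of_two_mul_le_abs {m n : Matrix (Fin 2) (Fin 2) ℝ} {t : ℝ}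
    (ht : 0 < t) (hne : cuspPt m ≠ cuspPt n) (hm : m 1 0 ≠ 0 → 2 * t ≤ |m 1 0|)
    (hn : n 1 0 ≠ 0 → 2 * t ≤ |n 1 0|)
    (hmn : m 0 0 * n 1 0 - n 0 0 * m 1 0 ≠ 0 → 2 * t ≤ |m 0 0 * n 1 0 - n 0 0 * m 1 0|) :
    Disjoint (horoball m t) (horoball n t) := by
  unfold horoball
  by_cases hm0 : m 1 0 = 0 <;> by_cases hn0 : n 1 0 = 0 <;> simp only [hm0, hn0, if_true, if_false]
  · simp [cuspPt, hm0, hn0] at hne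
  · exact Complex.disjoint_setOf_lt_im_ball_tangent (two_mul_div_sq_le_one_div ht (hn hn0))
  · exact (Complex.disjoint_setOf_lt_im_ball_tangent (two_mul_div_sq_le_one_div ht (hm hm0))).symm
  · refine Complex.disjoint_ball_tangent_ball_tangent ?_
    have hD : m 0 0 * n 1 0 - n 0 0 * m 1 0 ≠ 0 := by
      refine fun hD => hne ?_
      rw [cuspPt, cuspPt, if_neg hm0, if_neg hn0, Option.some_inj, div_eq_div_iff hm0 hn0,
        ← sub_eq_zero, hD]
    have hsq : (2 * t) ^ 2 ≤ (m 0 0 * n 1 0 - n 0 0 * m 1 0) ^ 2 :=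
      sq_le_sq.mpr ((abs_of_pos (by positivity)).trans_le (hmn hD))
    calc 4 * (t / m 1 0 ^ 2) * (t / n 1 0 ^ 2) = (2 * t) ^ 2 / (m 1 0 * n 1 0) ^ 2 := by
          field_simp; ring
      _ ≤ (m 0 0 * n 1 0 - n 0 0 * m 1 0) ^ 2 / (m 1 0 * n 1 0) ^ 2 := by gcongr
      _ = (m 0 0 / m 1 0 - n 0 0 / n 1 0) ^ 2 := by field_simp

theorem Matrix.SpecialLinearGroup.inv_mul_apply_one_zero (g h : SL(2, ℝ)) :
    (g⁻¹ * h) 1 0 = g 0 0 * h 1 0 - h 0 0 * g 1 0 := by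
  simp only [Matrix.SpecialLinearGroup.coe_mul, Matrix.SpecialLinearGroup.coe_inv,
    Matrix.adjugate_fin_two, Matrix.mul_apply, Fin.sum_univ_two, Matrix.of_apply,
    Matrix.cons_val', Matrix.cons_val_fin_one, Matrix.cons_val_one, Matrix.cons_val_zero]
  ring

theorem Subgroup.csInf_abs_apply_one_zero_le {Γ : Subgroup SL(2, ℝ)} {k : SL(2, ℝ)}
    (hk : k ∈ Γ) (hk0 : k 1 0 ≠ 0) :
    sInf {r : ℝ | ∃ g ∈ Γ, g 1 0 ≠ 0 ∧ r = |g 1 0|} ≤ |k 1 0| :=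
  csInf_le ⟨0, by rintro r ⟨g, -, -, rfl⟩; positivity⟩ ⟨k, hk, hk0, rfl⟩

theorem horoballs_disjoint_general (Γ : Subgroup (Matrix.SpecialLinearGroup (Fin 2) ℝ))
    (t₀ : ℝ)
    (ht₀ : t₀ = (1 / 2) * sInf {r : ℝ | ∃ g ∈ Γ,
        (g : Matrix (Fin 2) (Fin 2) ℝ) 1 0 ≠ 0 ∧ r = |(g : Matrix (Fin 2) (Fin 2) ℝ) 1 0|})
    (t : ℝ) (ht : 0 < t) (htt₀ : t < t₀)
    (g h : Matrix.SpecialLinearGroup (Fin 2) ℝ) (hg : g ∈ Γ) (hh : h ∈ Γ)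
    (hne : cuspPt (g : Matrix (Fin 2) (Fin 2) ℝ) ≠ cuspPt (h : Matrix (Fin 2) (Fin 2) ℝ)) :
    Disjoint (horoball (g : Matrix (Fin 2) (Fin 2) ℝ) t)
      (horoball (h : Matrix (Fin 2) (Fin 2) ℝ) t) := by
  have hbound (k) (hk : k ∈ Γ) (hk0 : (k : Matrix (Fin 2) (Fin 2) ℝ) 1 0 ≠ 0) :
      2 * t ≤ |(k : Matrix (Fin 2) (Fin 2) ℝ) 1 0| := by
    linarith [Subgroup.csInf_abs_apply_one_zero_le hk hk0]
  refine disjoint_horoball_of_two_mul_le_abs ht hne (hbound g hg) (hbound h hh) ?_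
  rw [← Matrix.SpecialLinearGroup.inv_mul_apply_one_zero]
  exact hbound _ (mul_mem (inv_mem hg) hh)

/-- Let `Γ ≤ SL(2,ℝ)` contain the translation `z ↦ z + λ`, `λ > 0`, and set
`t₀ = (1/2) min {|c(g)| : g ∈ Γ, c(g) ≠ 0}` (the minimum being attained and positive).
If `0 < t < t₀`, then the horoballs `F_t(g(∞))` at distinct points `g(∞)`, `g ∈ Γ`,
are pairwise disjoint. -/
theorem horoballs_disjoint (Γ : Subgroup (Matrix.SpecialLinearGroup (Fin 2) ℝ))
    (lam : ℝ) (hlam : 0 < lam)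
    (U : Matrix.SpecialLinearGroup (Fin 2) ℝ)
    (hU : (U : Matrix (Fin 2) (Fin 2) ℝ) = !![1, lam; 0, 1]) (hUΓ : U ∈ Γ)
    (t₀ : ℝ)
    (ht₀ : t₀ = (1 / 2) * sInf {r : ℝ | ∃ g ∈ Γ,
        (g : Matrix (Fin 2) (Fin 2) ℝ) 1 0 ≠ 0 ∧ r = |(g : Matrix (Fin 2) (Fin 2) ℝ) 1 0|})
    (ht₀pos : 0 < t₀)
    (hmin : ∃ g ∈ Γ, (g : Matrix (Fin 2) (Fin 2) ℝ) 1 0 ≠ 0 ∧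
        |(g : Matrix (Fin 2) (Fin 2) ℝ) 1 0| = 2 * t₀)
    (t : ℝ) (ht : 0 < t) (htt₀ : t < t₀)
    (g h : Matrix.SpecialLinearGroup (Fin 2) ℝ) (hg : g ∈ Γ) (hh : h ∈ Γ)
    (hne : cuspPt (g : Matrix (Fin 2) (Fin 2) ℝ) ≠ cuspPt (h : Matrix (Fin 2) (Fin 2) ℝ)) :
    Disjoint (horoball (g : Matrix (Fin 2) (Fin 2) ℝ) t)
      (horoball (h : Matrix (Fin 2) (Fin 2) ℝ) t) :=
  horoballs_disjoint_general Γ t₀ ht₀ t ht htt₀ g h hg hh hne
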